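/- arXiv:1904.09005 — 2 statements merged into one kernel-verified Lean document; each statement's English description precedes it below -/
import Mathlib

section
/- Let 0 < α < γ and let S be a finite collection of cubes inside a cube Ω, each of measure at most |Ω|/2^d. Let Φ ≥ 0 be such that Σ_{ω∈S} Φ(ω)^{γ/α} ≤ Φ(Ω)^{γ/α}. If G > 0 satisfies G ≤ |ω|^α Φ(ω) for all ω ∈ S, then Σ_{ω∈S} (|Ω|/|ω|)^γ ≤ (2^{dγ}/(1−2^{−dγ})^{γ/α−1}) · |Ω|^γ · G^{−γ/α} · Φ(Ω)^{γ/α}. -/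
/-- Cell counting in the case `0 < α < γ` with `Φ^{γ/α}` subadditive: if
`G ≤ |ω|^α Φ(ω)` for every cube `ω ∈ S` and each `|ω| ≤ 2^{-d}|Ω|`, then
`Σ_{ω∈S} (|Ω|/|ω|)^γ ≤ (2^{dγ}/(1−2^{−dγ})^{γ/α−1}) |Ω|^γ G^{−γ/α} Φ(Ω)^{γ/α}`. -/
theorem stmt6 (d : ℕ) (hd : 1 ≤ d) (α γ : ℝ) (hα : 0 < α) (hαγ : α < γ)
    (ι : Type*) (S : Finset ι) (vΩ : ℝ) (hvΩ : 0 < vΩ)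
    (v : ι → ℝ) (hv : ∀ ω ∈ S, 0 < v ω) (hv2 : ∀ ω ∈ S, v ω ≤ vΩ / 2 ^ d)
    (Φ : ι → ℝ) (hΦ : ∀ ω ∈ S, 0 ≤ Φ ω) (ΦΩ : ℝ) (hΦΩ : 0 ≤ ΦΩ)
    (hsub : ∑ ω ∈ S, Φ ω ^ (γ/α) ≤ ΦΩ ^ (γ/α))
    (G : ℝ) (hG : 0 < G) (hGle : ∀ ω ∈ S, G ≤ v ω ^ α * Φ ω) :
    ∑ ω ∈ S, (vΩ / v ω) ^ γ
      ≤ (2:ℝ) ^ ((d:ℝ) * γ) / (1 - (2:ℝ) ^ (-(d:ℝ) * γ)) ^ (γ/α - 1)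
          * vΩ ^ γ * G ^ (-(γ/α)) * ΦΩ ^ (γ/α) := by
  have hγ : 0 < γ := hα.trans hαγ
  have hga : 0 < γ / α := div_pos hγ hα
  -- pointwise bound
  have key : ∀ ω ∈ S, (vΩ / v ω) ^ γ ≤ vΩ ^ γ * G ^ (-(γ/α)) * Φ ω ^ (γ/α) := by
    intro ω hω
    have hvω := hv ω hω
    have hpow : (0:ℝ) < v ω ^ α := Real.rpow_pos_of_pos hvω α
    have h1 : v ω ^ (-α) ≤ Φ ω / G := by
      rw [Real.rpow_neg hvω.le, le_div_iff₀ hG, inv_mul_le_iff₀ hpow]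
      exact hGle ω hω
    have h2 : (v ω ^ (-α)) ^ (γ/α) ≤ (Φ ω / G) ^ (γ/α) :=
      Real.rpow_le_rpow (Real.rpow_nonneg hvω.le _) h1 hga.le
    have hL : (v ω ^ (-α)) ^ (γ/α) = v ω ^ (-γ) := by
      rw [← Real.rpow_mul hvω.le]
      congr 1
      field_simp
    have hR : (Φ ω / G) ^ (γ/α) = G ^ (-(γ/α)) * Φ ω ^ (γ/α) := by
      rw [Real.div_rpow (hΦ ω hω) hG.le, Real.rpow_neg hG.le]
      ring
    calc (vΩ / v ω) ^ γ = vΩ ^ γ * v ω ^ (-γ) := by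
          rw [Real.div_rpow hvΩ.le hvω.le, Real.rpow_neg hvω.le]; ring
      _ ≤ vΩ ^ γ * (G ^ (-(γ/α)) * Φ ω ^ (γ/α)) := by
          apply mul_le_mul_of_nonneg_left _ (Real.rpow_nonneg hvΩ.le _)
          rw [← hR, ← hL]; exact h2
      _ = vΩ ^ γ * G ^ (-(γ/α)) * Φ ω ^ (γ/α) := by ring
  have hsum : ∑ ω ∈ S, (vΩ / v ω) ^ γ ≤ vΩ ^ γ * G ^ (-(γ/α)) * ΦΩ ^ (γ/α) := by
    calc ∑ ω ∈ S, (vΩ / v ω) ^ γ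
        ≤ ∑ ω ∈ S, vΩ ^ γ * G ^ (-(γ/α)) * Φ ω ^ (γ/α) := Finset.sum_le_sum key
      _ = vΩ ^ γ * G ^ (-(γ/α)) * ∑ ω ∈ S, Φ ω ^ (γ/α) := by
          rw [Finset.mul_sum]
      _ ≤ vΩ ^ γ * G ^ (-(γ/α)) * ΦΩ ^ (γ/α) := by
          apply mul_le_mul_of_nonneg_left hsub
          positivity
  -- the constant is at least 1
  have hdγ : 0 < (d:ℝ) * γ := by
    apply mul_pos _ hγ
    exact_mod_cast Nat.pos_of_ne_zero (by omega)
  have hB0 : (2:ℝ) ^ (-(d:ℝ) * γ) < 1 := by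
    apply Real.rpow_lt_one_of_one_lt_of_neg one_lt_two
    linarith
  have hB0' : (0:ℝ) < (2:ℝ) ^ (-(d:ℝ) * γ) := Real.rpow_pos_of_pos two_pos _
  have hBe : (0:ℝ) < (1 - (2:ℝ) ^ (-(d:ℝ) * γ)) ^ (γ/α - 1) :=
    Real.rpow_pos_of_pos (by linarith) _
  have hBe1 : (1 - (2:ℝ) ^ (-(d:ℝ) * γ)) ^ (γ/α - 1) ≤ 1 := by
    apply Real.rpow_le_one (by linarith) (by linarith)
    have : 1 < γ / α := (one_lt_div hα).mpr hαγ
    linarith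
  have hA1 : (1:ℝ) ≤ (2:ℝ) ^ ((d:ℝ) * γ) :=
    Real.one_le_rpow one_le_two hdγ.le
  have hC : (1:ℝ) ≤ (2:ℝ) ^ ((d:ℝ) * γ) / (1 - (2:ℝ) ^ (-(d:ℝ) * γ)) ^ (γ/α - 1) := by
    rw [one_le_div hBe]
    exact hBe1.trans hA1
  calc ∑ ω ∈ S, (vΩ / v ω) ^ γ ≤ vΩ ^ γ * G ^ (-(γ/α)) * ΦΩ ^ (γ/α) := hsum
    _ = 1 * (vΩ ^ γ * G ^ (-(γ/α)) * ΦΩ ^ (γ/α)) := by ring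
    _ ≤ (2:ℝ) ^ ((d:ℝ) * γ) / (1 - (2:ℝ) ^ (-(d:ℝ) * γ)) ^ (γ/α - 1)
          * (vΩ ^ γ * G ^ (-(γ/α)) * ΦΩ ^ (γ/α)) := by
        apply mul_le_mul_of_nonneg_right hC
        positivity
    _ = (2:ℝ) ^ ((d:ℝ) * γ) / (1 - (2:ℝ) ^ (-(d:ℝ) * γ)) ^ (γ/α - 1)
          * vΩ ^ γ * G ^ (-(γ/α)) * ΦΩ ^ (γ/α) := by ring
end

section
/- Let g: Ω → ℝ be continuous on the closure of a cube ω ⊂ Ω with center c, such that g(c) = max_Ω g and g vanishes near the boundary of ω (g = 0 outside a closed ball of radius (1/2)·side(ω) centered at c). Let δ ⊂ Ω be an open convex set whose closure contains c but is not contained in ω, and let s be constant on δ. If min_Ω g = 0 and M := max_Ω g > 0, then ‖g − s‖_{L_∞(Ω)} > M/2 − ε for every ε > 0; i.e., ‖g − s‖_{L_∞(Ω)} ≥ M/2. -/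
open Set

/-- Localization step in the lower-bound proof: if `g ≥ 0` on `Ω` attains its
maximum `M = g(c) > 0` at the center `c` of a cube `ω ⊆ Ω` of side `h`, vanishes
outside the inscribed ball of radius `h/2`, and `δ ⊆ Ω` is an open convex set
whose closure contains `c` but which is not contained in `ω`, then every constant
`s` satisfies `‖g − s‖_{L_∞(Ω)} ≥ M/2`. -/
theorem stmt17 (d : ℕ) (hd : 1 ≤ d)
    (Ω ω δ : Set (EuclideanSpace ℝ (Fin d)))
    (c : EuclideanSpace ℝ (Fin d)) (h : ℝ) (hh : 0 < h)
    (hω : ω = {x | ∀ k, |x k - c k| < h/2})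
    (hωΩ : ω ⊆ Ω) (hδΩ : δ ⊆ Ω) (hδopen : IsOpen δ) (hδconv : Convex ℝ δ)
    (hcδ : c ∈ closure δ) (hδω : ¬ δ ⊆ ω)
    (g : EuclideanSpace ℝ (Fin d) → ℝ) (hg : Continuous g)
    (hmax : ∀ x ∈ Ω, g x ≤ g c) (hpos : 0 < g c) (hmin : ∀ x ∈ Ω, 0 ≤ g x)
    (hvanish : ∀ x, h/2 ≤ dist x c → g x = 0)
    (s : ℝ) :
    g c / 2 ≤ sSup ((fun x => |g x - s|) '' Ω) := by
  -- pick a point of δ outside ω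
  obtain ⟨y, hyδ, hyω⟩ : ∃ y, y ∈ δ ∧ y ∉ ω := by
    by_contra hcon
    push_neg at hcon
    exact hδω hcon
  -- y is far from c in some coordinate
  have hyfar : h/2 ≤ dist y c := by
    rw [hω] at hyω
    simp only [Set.mem_setOf_eq, not_forall, not_lt] at hyω
    obtain ⟨k, hk⟩ := hyω
    calc h/2 ≤ |y k - c k| := hk
      _ = dist (y k) (c k) := (Real.dist_eq _ _).symm
      _ ≤ dist y c := by
        rw [EuclideanSpace.dist_eq]
        have : dist (y k) (c k) = Real.sqrt ((dist (y k) (c k))^2) := by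
          rw [Real.sqrt_sq dist_nonneg]
        rw [this]
        apply Real.sqrt_le_sqrt
        exact Finset.single_le_sum (f := fun i => dist (y i) (c i) ^ 2)
          (fun i _ => sq_nonneg _) (Finset.mem_univ k)
  have hgy : g y = 0 := hvanish y hyfar
  have hcω : c ∈ ω := by
    rw [hω]; intro k; simpa using half_pos hh
  have hcΩ : c ∈ Ω := hωΩ hcω
  have hyΩ : y ∈ Ω := hδΩ hyδ
  -- boundedness
  have hbdd : BddAbove ((fun x => |g x - s|) '' Ω) := by
    refine ⟨g c + |s|, ?_⟩
    rintro _ ⟨x, hx, rfl⟩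
    have h1 := hmax x hx
    have h2 := hmin x hx
    have := abs_sub (g x) s
    calc |g x - s| ≤ |g x| + |s| := abs_sub _ _
      _ ≤ g c + |s| := by
        rw [abs_of_nonneg h2]; linarith
  have h1 : |g c - s| ≤ sSup ((fun x => |g x - s|) '' Ω) :=
    le_csSup hbdd ⟨c, hcΩ, rfl⟩
  have h2 : |s| ≤ sSup ((fun x => |g x - s|) '' Ω) := by
    have : |g y - s| = |s| := by rw [hgy]; simp [abs_sub_comm]
    rw [← this]
    exact le_csSup hbdd ⟨y, hyΩ, rfl⟩
  have h3 : g c ≤ |g c - s| + |s| := by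
    calc g c = |g c| := (abs_of_nonneg hpos.le).symm
      _ = |(g c - s) + s| := by ring_nf
      _ ≤ |g c - s| + |s| := abs_add_le _ _
  linarith
end
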